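/- Suppose C_1 < C_2 and ρ_{12} = 0. Then for every Q with ρ_{11} ≤ Q < 1, P_cor^opt(Q) = C_2(1−Q), and this value is attained by the POVM determined by ρ_0^{1/2}M_0ρ_0^{1/2} = ρ_{11}|ν_1⟩⟨ν_1| + (Q−ρ_{11})|ν_2⟩⟨ν_2|, M_1 = 0, ρ_0^{1/2}M_2ρ_0^{1/2} = (1−Q)|ν_2⟩⟨ν_2|. -/

import Mathlib

/-! In the orthonormal basis `ν₁, ν₂` the operators `ρ̄ᵢ = S⁻¹(qᵢρᵢ)S⁻¹` are diagonal,
`ρ̄₁ = diag(C₁, 1 - C₂)` and `ρ̄₂ = diag(1 - C₁, C₂)`, so `C₁ ≤ C₂` and `C₁ + C₂ > 1` give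
`ρ̄ᵢ ≤ C₂`. With `Tᵢ = S Mᵢ S` this yields
`P_cor = tr(ρ̄₁T₁) + tr(ρ̄₂T₂) ≤ C₂ tr(T₁ + T₂) = C₂ (tr(S²) - tr T₀) = C₂ (1 - P_I)`.
If `ρ₁₂ = 0`, then `S² = ρ₀ = ρ₁₁|ν₁⟩⟨ν₁| + ρ₂₂|ν₂⟩⟨ν₂|` with `ρ₁₁ + ρ₂₂ = 1`, so the positive
matrices `T₀ = ρ₁₁|ν₁⟩⟨ν₁| + (Q - ρ₁₁)|ν₂⟩⟨ν₂|`, `T₁ = 0`, `T₂ = (1 - Q)|ν₂⟩⟨ν₂|` sum to `S²`;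
hence `Mᵢ = S⁻¹TᵢS⁻¹` is a POVM with `P_I = Q`, and it meets the bound since `T₂` lives on the
`C₂`-eigenspace of `ρ̄₂`. -/

open Matrix ComplexOrder

noncomputable section

namespace FRIR

/-- A three-outcome POVM on a qubit: `M₀` is the inconclusive outcome. -/
def IsPOVM (M₀ M₁ M₂ : Matrix (Fin 2) (Fin 2) ℂ) : Prop :=
  M₀.PosSemidef ∧ M₁.PosSemidef ∧ M₂.PosSemidef ∧ M₀ + M₁ + M₂ = 1

/-- `ρ₀ = q₁ρ₁ + q₂ρ₂`. -/
def rho0 (q₁ q₂ : ℝ) (ρ₁ ρ₂ : Matrix (Fin 2) (Fin 2) ℂ) : Matrix (Fin 2) (Fin 2) ℂ :=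
  (q₁ : ℂ) • ρ₁ + (q₂ : ℂ) • ρ₂

/-- The probability of the inconclusive result, `P_I = tr(ρ₀M₀)`. -/
def PIof (q₁ q₂ : ℝ) (ρ₁ ρ₂ M₀ : Matrix (Fin 2) (Fin 2) ℂ) : ℝ :=
  (Matrix.trace (rho0 q₁ q₂ ρ₁ ρ₂ * M₀)).re

/-- `P_cor = q₁tr(ρ₁M₁) + q₂tr(ρ₂M₂)`. -/
def Pcor (q₁ q₂ : ℝ) (ρ₁ ρ₂ M₁ M₂ : Matrix (Fin 2) (Fin 2) ℂ) : ℝ :=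
  q₁ * (Matrix.trace (ρ₁ * M₁)).re + q₂ * (Matrix.trace (ρ₂ * M₂)).re

/-- `P̄_cor = q·tr(ρ₀M₀) + q₁tr(ρ₁M₁) + q₂tr(ρ₂M₂)`. -/
def PbarCor (q q₁ q₂ : ℝ) (ρ₁ ρ₂ M₀ M₁ M₂ : Matrix (Fin 2) (Fin 2) ℂ) : ℝ :=
  q * PIof q₁ q₂ ρ₁ ρ₂ M₀ + Pcor q₁ q₂ ρ₁ ρ₂ M₁ M₂

/-- `P̄_cor^opt(q)`: the maximal value of `P̄_cor` over all POVMs. -/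
def PbarOpt (q q₁ q₂ : ℝ) (ρ₁ ρ₂ : Matrix (Fin 2) (Fin 2) ℂ) : ℝ :=
  sSup {x : ℝ | ∃ M₀ M₁ M₂, IsPOVM M₀ M₁ M₂ ∧ PbarCor q q₁ q₂ ρ₁ ρ₂ M₀ M₁ M₂ = x}

/-- `P_cor^opt(Q)`: the maximal value of `P_cor` over POVMs with `P_I = Q`. -/
def PcorOpt (Q q₁ q₂ : ℝ) (ρ₁ ρ₂ : Matrix (Fin 2) (Fin 2) ℂ) : ℝ :=
  sSup {x : ℝ | ∃ M₀ M₁ M₂, IsPOVM M₀ M₁ M₂ ∧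
    PIof q₁ q₂ ρ₁ ρ₂ M₀ = Q ∧ Pcor q₁ q₂ ρ₁ ρ₂ M₁ M₂ = x}

/-- `P_I(q) = { tr(ρ₀M₀) : POVMs attaining P̄_cor^opt(q) }`. -/
def PIset (q q₁ q₂ : ℝ) (ρ₁ ρ₂ : Matrix (Fin 2) (Fin 2) ℂ) : Set ℝ :=
  {Q : ℝ | ∃ M₀ M₁ M₂, IsPOVM M₀ M₁ M₂ ∧
    PbarCor q q₁ q₂ ρ₁ ρ₂ M₀ M₁ M₂ = PbarOpt q q₁ q₂ ρ₁ ρ₂ ∧ PIof q₁ q₂ ρ₁ ρ₂ M₀ = Q}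

/-- `q₀⁽⁰⁾ = sup{q > 0 : 0 ∈ P_I(q)}`. -/
def q0low (q₁ q₂ : ℝ) (ρ₁ ρ₂ : Matrix (Fin 2) (Fin 2) ℂ) : ℝ :=
  sSup {q : ℝ | 0 < q ∧ (0 : ℝ) ∈ PIset q q₁ q₂ ρ₁ ρ₂}

/-- `q₀⁽¹⁾ = inf{q > 0 : 1 ∈ P_I(q)}`. -/
def q0high (q₁ q₂ : ℝ) (ρ₁ ρ₂ : Matrix (Fin 2) (Fin 2) ℂ) : ℝ :=
  sInf {q : ℝ | 0 < q ∧ (1 : ℝ) ∈ PIset q q₁ q₂ ρ₁ ρ₂}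

end FRIR

namespace Matrix

variable {n 𝕜 : Type*} [RCLike 𝕜]

lemma vecMulVec_star_mul_mul_vecMulVec_star [Fintype n] (a b : n → 𝕜) (R : Matrix n n 𝕜) :
    vecMulVec a (star a) * R * vecMulVec b (star b)
      = (star a ⬝ᵥ (R *ᵥ b)) • vecMulVec a (star b) := by
  rw [vecMulVec_mul, vecMulVec_mul_vecMulVec, ← dotProduct_mulVec, vecMulVec_smul]

lemma trace_smul_vecMulVec_add_smul_vecMulVec [Fintype n] {ν₁ ν₂ : n → 𝕜}
    (hν₁ : star ν₁ ⬝ᵥ ν₁ = 1) (hν₂ : star ν₂ ⬝ᵥ ν₂ = 1) (a b : 𝕜) :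
    (a • vecMulVec ν₁ (star ν₁) + b • vecMulVec ν₂ (star ν₂)).trace = a + b := by
  rw [trace_add, trace_smul, trace_smul, trace_vecMulVec, trace_vecMulVec, dotProduct_comm ν₁,
    dotProduct_comm ν₂, hν₁, hν₂, smul_eq_mul, smul_eq_mul, mul_one, mul_one]

variable [DecidableEq n]

lemma posSemidef_smul_one_sub_smul_add_smul {P₁ P₂ : Matrix n n 𝕜} (hP₁ : P₁.PosSemidef)
    (hP₂ : P₂.PosSemidef) (hres : P₁ + P₂ = 1) {a b c : ℝ} (ha : a ≤ c) (hb : b ≤ c) :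
    ((c : 𝕜) • 1 - ((a : 𝕜) • P₁ + (b : 𝕜) • P₂)).PosSemidef := by
  have h : (c : 𝕜) • 1 - ((a : 𝕜) • P₁ + (b : 𝕜) • P₂)
      = ((c - a : ℝ) : 𝕜) • P₁ + ((c - b : ℝ) : 𝕜) • P₂ := by
    rw [← hres]
    push_cast
    module
  rw [h]
  exact (hP₁.smul (RCLike.ofReal_nonneg.mpr (sub_nonneg.mpr ha))).add
    (hP₂.smul (RCLike.ofReal_nonneg.mpr (sub_nonneg.mpr hb)))

variable [Fintype n]

open scoped MatrixOrder in
lemma PosSemidef.trace_mul_nonneg {A B : Matrix n n 𝕜} (hA : A.PosSemidef) (hB : B.PosSemidef) :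
    0 ≤ (A * B).trace := by
  obtain ⟨C, rfl⟩ := CStarAlgebra.nonneg_iff_eq_star_mul_self.mp hA.nonneg
  rw [star_eq_conjTranspose, Matrix.mul_assoc, trace_mul_comm]
  exact (hB.mul_mul_conjTranspose_same C).trace_nonneg

lemma re_trace_mul_le_of_posSemidef_smul_one_sub {A T : Matrix n n 𝕜} {c : ℝ}
    (hA : ((c : 𝕜) • 1 - A).PosSemidef) (hT : T.PosSemidef) :
    RCLike.re (A * T).trace ≤ c * RCLike.re T.trace := by
  have h := (RCLike.nonneg_iff.mp (hA.trace_mul_nonneg hT)).1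
  rw [sub_mul, smul_mul_assoc, one_mul, trace_sub, trace_smul, map_sub, smul_eq_mul,
    RCLike.re_ofReal_mul] at h
  linarith

lemma sum_vecMulVec_star_eq_one {v : n → n → 𝕜}
    (hv : ∀ i j, star (v i) ⬝ᵥ v j = if i = j then 1 else 0) :
    ∑ i, vecMulVec (v i) (star (v i)) = 1 := by
  set U : Matrix n n 𝕜 := (of v)ᵀ
  have hU : Uᴴ * U = 1 := by
    ext i j
    simpa [U, mul_apply, dotProduct, one_apply] using hv i j
  rw [← mul_eq_one_comm.mp hU]
  ext i j
  simp [U, mul_apply, vecMulVec_apply, sum_apply]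

lemma vecMulVec_star_add_vecMulVec_star_eq_one {ν₁ ν₂ : Fin 2 → 𝕜}
    (hν₁ : star ν₁ ⬝ᵥ ν₁ = 1) (hν₂ : star ν₂ ⬝ᵥ ν₂ = 1) (hν₁₂ : star ν₁ ⬝ᵥ ν₂ = 0) :
    vecMulVec ν₁ (star ν₁) + vecMulVec ν₂ (star ν₂) = 1 := by
  have hν₂₁ : star ν₂ ⬝ᵥ ν₁ = 0 := by
    rw [star_dotProduct, hν₁₂, star_zero]
  simpa using sum_vecMulVec_star_eq_one (v := ![ν₁, ν₂])
    (by intro i j; fin_cases i <;> fin_cases j <;> simp [*])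

lemma IsHermitian.eq_smul_vecMulVec_add_smul_vecMulVec {R : Matrix n n 𝕜} (hR : R.IsHermitian)
    {ν₁ ν₂ : n → 𝕜} (hres : vecMulVec ν₁ (star ν₁) + vecMulVec ν₂ (star ν₂) = 1)
    (h₁₂ : star ν₁ ⬝ᵥ (R *ᵥ ν₂) = 0) :
    R = (star ν₁ ⬝ᵥ (R *ᵥ ν₁)) • vecMulVec ν₁ (star ν₁)
      + (star ν₂ ⬝ᵥ (R *ᵥ ν₂)) • vecMulVec ν₂ (star ν₂) := by
  have h₂₁ : star ν₂ ⬝ᵥ (R *ᵥ ν₁) = 0 := by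
    rw [star_dotProduct, star_mulVec, ← dotProduct_mulVec, hR.eq, h₁₂, star_zero]
  calc R = (vecMulVec ν₁ (star ν₁) + vecMulVec ν₂ (star ν₂)) * R
        * (vecMulVec ν₁ (star ν₁) + vecMulVec ν₂ (star ν₂)) := by
        rw [hres, Matrix.one_mul, Matrix.mul_one]
    _ = _ := by
        simp only [Matrix.add_mul, Matrix.mul_add, vecMulVec_star_mul_mul_vecMulVec_star, h₁₂,
          h₂₁, zero_smul, add_zero, zero_add]

end Matrix

namespace FRIR

variable {q₁ q₂ : ℝ} {ρ₁ ρ₂ S : Matrix (Fin 2) (Fin 2) ℂ}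

lemma trace_rho0 (hq : q₁ + q₂ = 1) (htr₁ : ρ₁.trace = 1) (htr₂ : ρ₂.trace = 1) :
    (rho0 q₁ q₂ ρ₁ ρ₂).trace = 1 := by
  simp [rho0, trace_add, trace_smul, htr₁, htr₂, ← Complex.ofReal_add, hq]

lemma PIof_eq (hSS : S * S = rho0 q₁ q₂ ρ₁ ρ₂) (M₀ : Matrix (Fin 2) (Fin 2) ℂ) :
    PIof q₁ q₂ ρ₁ ρ₂ M₀ = (S * M₀ * S).trace.re := by
  rw [PIof, ← hSS, Matrix.mul_assoc, trace_mul_comm]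

lemma mul_re_trace_mul_eq {q : ℝ} {ρ ρbar : Matrix (Fin 2) (Fin 2) ℂ}
    (h : S * ρbar * S = (q : ℂ) • ρ) (M : Matrix (Fin 2) (Fin 2) ℂ) :
    q * (ρ * M).trace.re = (ρbar * (S * M * S)).trace.re := by
  rw [← Complex.re_ofReal_mul, ← smul_eq_mul, ← trace_smul, ← smul_mul_assoc, ← h,
    Matrix.mul_assoc, Matrix.mul_assoc, trace_mul_comm S]
  simp only [Matrix.mul_assoc]

lemma Pcor_eq {ρbar₁ ρbar₂ : Matrix (Fin 2) (Fin 2) ℂ}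
    (hbar₁ : S * ρbar₁ * S = (q₁ : ℂ) • ρ₁) (hbar₂ : S * ρbar₂ * S = (q₂ : ℂ) • ρ₂)
    (M₁ M₂ : Matrix (Fin 2) (Fin 2) ℂ) :
    Pcor q₁ q₂ ρ₁ ρ₂ M₁ M₂
      = (ρbar₁ * (S * M₁ * S)).trace.re + (ρbar₂ * (S * M₂ * S)).trace.re := by
  rw [Pcor, mul_re_trace_mul_eq hbar₁, mul_re_trace_mul_eq hbar₂]

lemma Pcor_le_of_posSemidef_smul_one_sub (hS : S.IsHermitian) (hSS : S * S = rho0 q₁ q₂ ρ₁ ρ₂)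
    (htr : (rho0 q₁ q₂ ρ₁ ρ₂).trace = 1) {ρbar₁ ρbar₂ : Matrix (Fin 2) (Fin 2) ℂ}
    (hbar₁ : S * ρbar₁ * S = (q₁ : ℂ) • ρ₁) (hbar₂ : S * ρbar₂ * S = (q₂ : ℂ) • ρ₂) {c : ℝ}
    (hc₁ : ((c : ℂ) • 1 - ρbar₁).PosSemidef) (hc₂ : ((c : ℂ) • 1 - ρbar₂).PosSemidef)
    {M₀ M₁ M₂ : Matrix (Fin 2) (Fin 2) ℂ} (hM : IsPOVM M₀ M₁ M₂) :
    Pcor q₁ q₂ ρ₁ ρ₂ M₁ M₂ ≤ c * (1 - PIof q₁ q₂ ρ₁ ρ₂ M₀) := by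
  obtain ⟨hM₀, hM₁, hM₂, hsum⟩ := hM
  have hconj : ∀ {M : Matrix (Fin 2) (Fin 2) ℂ}, M.PosSemidef → (S * M * S).PosSemidef :=
    fun hM => by simpa only [hS.eq] using hM.mul_mul_conjTranspose_same S
  have htotal : (S * M₀ * S).trace.re + (S * M₁ * S).trace.re + (S * M₂ * S).trace.re = 1 := by
    simp only [← Complex.add_re, ← trace_add, ← Matrix.add_mul, ← Matrix.mul_add, hsum,
      Matrix.mul_one, hSS, htr, Complex.one_re]
  have h₁ := re_trace_mul_le_of_posSemidef_smul_one_sub hc₁ (hconj hM₁)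
  have h₂ := re_trace_mul_le_of_posSemidef_smul_one_sub hc₂ (hconj hM₂)
  rw [Pcor_eq hbar₁ hbar₂, PIof_eq hSS]
  simp only [RCLike.re_to_complex] at h₁ h₂
  have hrest : c * (1 - (S * M₀ * S).trace.re)
      = c * (S * M₁ * S).trace.re + c * (S * M₂ * S).trace.re := by
    rw [← htotal]; ring
  linarith

lemma Pcor_le_of_isPOVM (hS : S.IsHermitian) (hSS : S * S = rho0 q₁ q₂ ρ₁ ρ₂)
    (htr : (rho0 q₁ q₂ ρ₁ ρ₂).trace = 1) {ν₁ ν₂ : Fin 2 → ℂ}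
    (hres : vecMulVec ν₁ (star ν₁) + vecMulVec ν₂ (star ν₂) = 1) {C₁ C₂ : ℝ} (hC12 : C₁ ≤ C₂)
    (hCsum : 1 ≤ C₁ + C₂)
    (hbar₁ : S * ((C₁ : ℂ) • vecMulVec ν₁ (star ν₁)
        + ((1 - C₂ : ℝ) : ℂ) • vecMulVec ν₂ (star ν₂)) * S = (q₁ : ℂ) • ρ₁)
    (hbar₂ : S * (((1 - C₁ : ℝ) : ℂ) • vecMulVec ν₁ (star ν₁)
        + (C₂ : ℂ) • vecMulVec ν₂ (star ν₂)) * S = (q₂ : ℂ) • ρ₂)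
    {M₀ M₁ M₂ : Matrix (Fin 2) (Fin 2) ℂ} (hM : IsPOVM M₀ M₁ M₂) :
    Pcor q₁ q₂ ρ₁ ρ₂ M₁ M₂ ≤ C₂ * (1 - PIof q₁ q₂ ρ₁ ρ₂ M₀) := by
  have hP₁ := posSemidef_vecMulVec_self_star ν₁
  have hP₂ := posSemidef_vecMulVec_self_star ν₂
  exact Pcor_le_of_posSemidef_smul_one_sub hS hSS htr hbar₁ hbar₂
    (posSemidef_smul_one_sub_smul_add_smul hP₁ hP₂ hres hC12 (by linarith : 1 - C₂ ≤ C₂))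
    (posSemidef_smul_one_sub_smul_add_smul hP₁ hP₂ hres (by linarith : 1 - C₁ ≤ C₂) le_rfl) hM

lemma isPOVM_inv_mul_mul_inv (hS : S.IsHermitian) (hdet : IsUnit S.det)
    {X₀ X₁ X₂ : Matrix (Fin 2) (Fin 2) ℂ} (hX₀ : X₀.PosSemidef) (hX₁ : X₁.PosSemidef)
    (hX₂ : X₂.PosSemidef) (hX : X₀ + X₁ + X₂ = S * S) :
    IsPOVM (S⁻¹ * X₀ * S⁻¹) (S⁻¹ * X₁ * S⁻¹) (S⁻¹ * X₂ * S⁻¹) := by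
  have hconj : ∀ {X : Matrix (Fin 2) (Fin 2) ℂ}, X.PosSemidef → (S⁻¹ * X * S⁻¹).PosSemidef :=
    fun hX => by simpa only [hS.inv.eq] using hX.mul_mul_conjTranspose_same S⁻¹
  refine ⟨hconj hX₀, hconj hX₁, hconj hX₂, ?_⟩
  rw [← Matrix.add_mul, ← Matrix.add_mul, ← Matrix.mul_add, ← Matrix.mul_add, hX,
    ← Matrix.mul_assoc, nonsing_inv_mul _ hdet, Matrix.one_mul, mul_nonsing_inv _ hdet]

lemma exists_isPOVM_Pcor_eq (hS : S.IsHermitian) (hdet : IsUnit S.det)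
    (hSS : S * S = rho0 q₁ q₂ ρ₁ ρ₂) {ν₁ ν₂ : Fin 2 → ℂ} (hν₁ : star ν₁ ⬝ᵥ ν₁ = 1)
    (hν₂ : star ν₂ ⬝ᵥ ν₂ = 1) (hν₁₂ : star ν₁ ⬝ᵥ ν₂ = 0) {ρ11 ρ22 C₁ C₂ Q : ℝ}
    (hdiag : rho0 q₁ q₂ ρ₁ ρ₂ = (ρ11 : ℂ) • vecMulVec ν₁ (star ν₁)
      + (ρ22 : ℂ) • vecMulVec ν₂ (star ν₂))
    (hsum : ρ11 + ρ22 = 1) (hρ11 : 0 ≤ ρ11) (hQ₁ : ρ11 ≤ Q) (hQ : Q < 1)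
    (hbar₂ : S * (((1 - C₁ : ℝ) : ℂ) • vecMulVec ν₁ (star ν₁)
        + (C₂ : ℂ) • vecMulVec ν₂ (star ν₂)) * S = (q₂ : ℂ) • ρ₂) :
    ∃ M₀ M₁ M₂ : Matrix (Fin 2) (Fin 2) ℂ, IsPOVM M₀ M₁ M₂ ∧
      PIof q₁ q₂ ρ₁ ρ₂ M₀ = Q ∧
      Pcor q₁ q₂ ρ₁ ρ₂ M₁ M₂ = C₂ * (1 - Q) ∧
      S * M₀ * S = (ρ11 : ℂ) • vecMulVec ν₁ (star ν₁)
        + ((Q - ρ11 : ℝ) : ℂ) • vecMulVec ν₂ (star ν₂) ∧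
      M₁ = 0 ∧
      S * M₂ * S = ((1 - Q : ℝ) : ℂ) • vecMulVec ν₂ (star ν₂) := by
  set P₁ := vecMulVec ν₁ (star ν₁)
  set P₂ := vecMulVec ν₂ (star ν₂)
  have hP₁ : P₁.PosSemidef := posSemidef_vecMulVec_self_star ν₁
  have hP₂ : P₂.PosSemidef := posSemidef_vecMulVec_self_star ν₂
  have hP₁₂ : P₁ * P₂ = 0 := by rw [vecMulVec_mul_vecMulVec, hν₁₂, zero_smul, vecMulVec_zero]
  have hP₂₂ : P₂ * P₂ = P₂ := by rw [vecMulVec_mul_vecMulVec, hν₂, one_smul]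
  have hX₀ : ((ρ11 : ℂ) • P₁ + ((Q - ρ11 : ℝ) : ℂ) • P₂).PosSemidef :=
    (hP₁.smul (Complex.zero_le_real.mpr hρ11)).add
      (hP₂.smul (Complex.zero_le_real.mpr (sub_nonneg.mpr hQ₁)))
  have hX₂ : (((1 - Q : ℝ) : ℂ) • P₂).PosSemidef :=
    hP₂.smul (Complex.zero_le_real.mpr (sub_nonneg.mpr hQ.le))
  have hconj : ∀ X, S * (S⁻¹ * X * S⁻¹) * S = X := fun X => by
    simp only [← Matrix.mul_assoc, mul_nonsing_inv _ hdet, Matrix.one_mul]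
    rw [Matrix.mul_assoc, nonsing_inv_mul _ hdet, Matrix.mul_one]
  refine ⟨_, 0, _, ?_, ?_, ?_, hconj _, rfl, hconj _⟩
  · simpa using isPOVM_inv_mul_mul_inv hS hdet hX₀ PosSemidef.zero hX₂ (by
      rw [hSS, hdiag, add_zero, ← hsum]; push_cast; module)
  · rw [PIof_eq hSS, hconj, trace_smul_vecMulVec_add_smul_vecMulVec hν₁ hν₂]
    simp
  · rw [Pcor, Matrix.mul_zero, trace_zero, Complex.zero_re, mul_zero, zero_add,
      mul_re_trace_mul_eq hbar₂, hconj, Matrix.add_mul, smul_mul_assoc, smul_mul_assoc,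
      mul_smul_comm, mul_smul_comm, hP₁₂, hP₂₂]
    simp [trace_vecMulVec, dotProduct_comm ν₂, hν₂, P₂]

theorem stmt15_general
    (q₁ q₂ : ℝ) (ρ₁ ρ₂ : Matrix (Fin 2) (Fin 2) ℂ)
    (hq : q₁ + q₂ = 1)
    (htr₁ : ρ₁.trace = 1)
    (htr₂ : ρ₂.trace = 1)
    (hρ0 : (rho0 q₁ q₂ ρ₁ ρ₂).PosDef)
    (S : Matrix (Fin 2) (Fin 2) ℂ) (hS : S.PosSemidef) (hSS : S * S = rho0 q₁ q₂ ρ₁ ρ₂)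
    (ν₁ ν₂ : Fin 2 → ℂ)
    (hν₁ : star ν₁ ⬝ᵥ ν₁ = 1) (hν₂ : star ν₂ ⬝ᵥ ν₂ = 1) (hν₁₂ : star ν₁ ⬝ᵥ ν₂ = 0)
    (C₁ C₂ : ℝ) (hC12 : C₁ ≤ C₂) (hCsum : 1 < C₁ + C₂)
    (hbar₁ : S * ((C₁ : ℂ) • vecMulVec ν₁ (star ν₁)
        + ((1 - C₂ : ℝ) : ℂ) • vecMulVec ν₂ (star ν₂)) * S = (q₁ : ℂ) • ρ₁)
    (hbar₂ : S * (((1 - C₁ : ℝ) : ℂ) • vecMulVec ν₁ (star ν₁)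
        + (C₂ : ℂ) • vecMulVec ν₂ (star ν₂)) * S = (q₂ : ℂ) • ρ₂)
    (ρ11 ρ22 : ℝ) (ρ12 : ℂ)
    (h11 : (ρ11 : ℂ) = star ν₁ ⬝ᵥ (rho0 q₁ q₂ ρ₁ ρ₂ *ᵥ ν₁))
    (h22 : (ρ22 : ℂ) = star ν₂ ⬝ᵥ (rho0 q₁ q₂ ρ₁ ρ₂ *ᵥ ν₂))
    (h12 : ρ12 = star ν₁ ⬝ᵥ (rho0 q₁ q₂ ρ₁ ρ₂ *ᵥ ν₂))
    (h12z : ρ12 = 0) :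
    ∀ Q : ℝ, ρ11 ≤ Q → Q < 1 →
      PcorOpt Q q₁ q₂ ρ₁ ρ₂ = C₂ * (1 - Q) ∧
        ∃ M₀ M₁ M₂ : Matrix (Fin 2) (Fin 2) ℂ, IsPOVM M₀ M₁ M₂ ∧
          PIof q₁ q₂ ρ₁ ρ₂ M₀ = Q ∧
          Pcor q₁ q₂ ρ₁ ρ₂ M₁ M₂ = C₂ * (1 - Q) ∧
          S * M₀ * S = (ρ11 : ℂ) • vecMulVec ν₁ (star ν₁)
            + ((Q - ρ11 : ℝ) : ℂ) • vecMulVec ν₂ (star ν₂) ∧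
          M₁ = 0 ∧
          S * M₂ * S = ((1 - Q : ℝ) : ℂ) • vecMulVec ν₂ (star ν₂) := by
  intro Q hQ₁ hQ
  have hres := vecMulVec_star_add_vecMulVec_star_eq_one hν₁ hν₂ hν₁₂
  have htr := trace_rho0 hq htr₁ htr₂
  have hdiag : rho0 q₁ q₂ ρ₁ ρ₂
      = (ρ11 : ℂ) • vecMulVec ν₁ (star ν₁) + (ρ22 : ℂ) • vecMulVec ν₂ (star ν₂) := by
    rw [h11, h22]
    exact hρ0.isHermitian.eq_smul_vecMulVec_add_smul_vecMulVec hres (h12 ▸ h12z)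
  have hsum : ρ11 + ρ22 = 1 := by
    have h := congrArg trace hdiag
    rw [htr, trace_smul_vecMulVec_add_smul_vecMulVec hν₁ hν₂] at h
    exact_mod_cast h.symm
  have hdet : IsUnit S.det :=
    isUnit_iff_isUnit_det S |>.mp (isUnit_of_mul_isUnit_left (hSS ▸ hρ0.isUnit))
  have hρ11 : 0 ≤ ρ11 :=
    Complex.zero_le_real.mp (h11 ▸ hρ0.posSemidef.dotProduct_mulVec_nonneg ν₁)
  obtain ⟨M₀, M₁, M₂, hM, hPI, hPcor, hM_spec⟩ := exists_isPOVM_Pcor_eq hS.isHermitian hdet hSS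
    hν₁ hν₂ hν₁₂ hdiag hsum hρ11 hQ₁ hQ hbar₂
  refine ⟨IsGreatest.csSup_eq ⟨⟨M₀, M₁, M₂, hM, hPI, hPcor⟩, ?_⟩, M₀, M₁, M₂, hM, hPI, hPcor,
    hM_spec⟩
  rintro _ ⟨N₀, N₁, N₂, hN, hNPI, rfl⟩
  simpa only [hNPI] using
    Pcor_le_of_isPOVM hS.isHermitian hSS htr hres hC12 hCsum.le hbar₁ hbar₂ hN

/-- If `C₁ < C₂` and `ρ₁₂ = 0`, then for `ρ₁₁ ≤ Q < 1`,
`P_cor^opt(Q) = C₂(1−Q)`, attained by the POVM with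
`ρ₀^½M₀ρ₀^½ = ρ₁₁|ν₁⟩⟨ν₁| + (Q−ρ₁₁)|ν₂⟩⟨ν₂|`, `M₁ = 0`,
`ρ₀^½M₂ρ₀^½ = (1−Q)|ν₂⟩⟨ν₂|`. -/
theorem stmt15
    (q₁ q₂ : ℝ) (ρ₁ ρ₂ : Matrix (Fin 2) (Fin 2) ℂ)
    (hq₁ : 0 < q₁) (hq₂ : 0 < q₂) (hq : q₁ + q₂ = 1)
    (hρ₁ : ρ₁.PosSemidef) (htr₁ : ρ₁.trace = 1)
    (hρ₂ : ρ₂.PosSemidef) (htr₂ : ρ₂.trace = 1)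
    (hρ0 : (rho0 q₁ q₂ ρ₁ ρ₂).PosDef)
    (S : Matrix (Fin 2) (Fin 2) ℂ) (hS : S.PosSemidef) (hSS : S * S = rho0 q₁ q₂ ρ₁ ρ₂)
    (ν₁ ν₂ : Fin 2 → ℂ)
    (hν₁ : star ν₁ ⬝ᵥ ν₁ = 1) (hν₂ : star ν₂ ⬝ᵥ ν₂ = 1) (hν₁₂ : star ν₁ ⬝ᵥ ν₂ = 0)
    (C₁ C₂ : ℝ) (hC12 : C₁ ≤ C₂) (hCsum : 1 < C₁ + C₂)
    (hbar₁ : S * ((C₁ : ℂ) • vecMulVec ν₁ (star ν₁)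
        + ((1 - C₂ : ℝ) : ℂ) • vecMulVec ν₂ (star ν₂)) * S = (q₁ : ℂ) • ρ₁)
    (hbar₂ : S * (((1 - C₁ : ℝ) : ℂ) • vecMulVec ν₁ (star ν₁)
        + (C₂ : ℂ) • vecMulVec ν₂ (star ν₂)) * S = (q₂ : ℂ) • ρ₂)
    (ρ11 ρ22 : ℝ) (ρ12 : ℂ)
    (h11 : (ρ11 : ℂ) = star ν₁ ⬝ᵥ (rho0 q₁ q₂ ρ₁ ρ₂ *ᵥ ν₁))
    (h22 : (ρ22 : ℂ) = star ν₂ ⬝ᵥ (rho0 q₁ q₂ ρ₁ ρ₂ *ᵥ ν₂))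
    (h12 : ρ12 = star ν₁ ⬝ᵥ (rho0 q₁ q₂ ρ₁ ρ₂ *ᵥ ν₂))
    (hClt : C₁ < C₂) (h12z : ρ12 = 0) :
    ∀ Q : ℝ, ρ11 ≤ Q → Q < 1 →
      PcorOpt Q q₁ q₂ ρ₁ ρ₂ = C₂ * (1 - Q) ∧
        ∃ M₀ M₁ M₂ : Matrix (Fin 2) (Fin 2) ℂ, IsPOVM M₀ M₁ M₂ ∧
          PIof q₁ q₂ ρ₁ ρ₂ M₀ = Q ∧
          Pcor q₁ q₂ ρ₁ ρ₂ M₁ M₂ = C₂ * (1 - Q) ∧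
          S * M₀ * S = (ρ11 : ℂ) • vecMulVec ν₁ (star ν₁)
            + ((Q - ρ11 : ℝ) : ℂ) • vecMulVec ν₂ (star ν₂) ∧
          M₁ = 0 ∧
          S * M₂ * S = ((1 - Q : ℝ) : ℂ) • vecMulVec ν₂ (star ν₂) :=
  stmt15_general q₁ q₂ ρ₁ ρ₂ hq htr₁ htr₂ hρ0 S hS hSS ν₁ ν₂ hν₁ hν₂ hν₁₂ C₁ C₂ hC12 hCsum hbar₁
    hbar₂ ρ11 ρ22 ρ12 h11 h22 h12 h12z

end FRIR
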